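/- arXiv:1202.3985 — 2 statements merged into one kernel-verified Lean document; each statement's English description precedes it below -/
import Mathlib

section
/- Let p_1,...,p_n be distinct primes with product M, M_i = M/p_i, a_i M_i ≡ 1 (mod p_i), and let c be an integer with M > 4|c| and c ≡ c_i (mod p_i) with 0 ≤ c_i < p_i. If r is the nearest integer to Σ_i c_i a_i / p_i, then c = Σ_i c_i a_i M_i − r M. -/
/-!
The sum `S = ∑ cᵢ aᵢ Mᵢ` is the classical CRT reconstruction, so `S ≡ c (mod M)`, i.e.
`S = c + k M`. Dividing by `M` gives `∑ cᵢ aᵢ / pᵢ = S / M = k + c / M`, and since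
`|c / M| < 1/2` the nearest integer to this is `k`; hence `c = S - r M`.
-/

open Finset Function

theorem Nat.prod_div_eq_prod_erase {ι : Type*} [DecidableEq ι] {s : Finset ι} {i : ι}
    (f : ι → ℕ) (hi : i ∈ s) (hfi : f i ≠ 0) :
    (∏ j ∈ s, f j) / f i = ∏ j ∈ s.erase i, f j := by
  rw [← mul_prod_erase s f hi, Nat.mul_div_cancel_left _ (Nat.pos_of_ne_zero hfi)]

theorem Finset.sum_div_eq_sum_mul_div {ι K : Type*} [Field K] (s : Finset ι) (x d q : ι → K)
    {N : K} (hN : N ≠ 0) (hdq : ∀ i ∈ s, d i * q i = N) :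
    ∑ i ∈ s, x i / d i = (∑ i ∈ s, x i * q i) / N := by
  rw [sum_div]
  refine sum_congr rfl fun i hi => ?_
  have hq : q i ≠ 0 := right_ne_zero_of_mul (hdq i hi ▸ hN)
  rw [← hdq i hi, mul_div_mul_right _ _ hq]

theorem Int.sum_mul_modEq_prod {ι : Type*} [Fintype ι] (m e r : ι → ℤ)
    (hm : Pairwise (IsCoprime on m)) (he : ∀ i, e i ≡ 1 [ZMOD m i])
    (hdvd : ∀ i j, i ≠ j → m i ∣ e j) (c : ℤ) (hc : ∀ i, c ≡ r i [ZMOD m i]) :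
    ∑ i, r i * e i ≡ c [ZMOD ∏ i, m i] := by
  refine Int.modEq_iff_dvd.2 (prod_dvd_of_coprime (hm.set_pairwise _) fun i _ => ?_)
  rw [← Int.modEq_iff_dvd]
  calc ∑ j, r j * e j
      ≡ r i * e i [ZMOD m i] := Int.sum_modEq_single (by simp) fun j _ hji =>
        Int.modEq_zero_iff_dvd.2 ((hdvd i j (Ne.symm hji)).mul_left _)
    _ ≡ r i * 1 [ZMOD m i] := (he i).mul_left _
    _ = r i := mul_one _
    _ ≡ c [ZMOD m i] := (hc i).symm

theorem Int.ModEq.eq_sub_round_div_mul {α : Type*} [Field α] [LinearOrder α]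
    [IsStrictOrderedRing α] [FloorRing α] {x c M : ℤ} (h : c ≡ x [ZMOD M])
    (hsmall : 2 * |c| < M) : c = x - round ((x : α) / M) * M := by
  obtain ⟨k, hk⟩ := h.dvd
  have hM : (0 : α) < M := by exact_mod_cast (by linarith [abs_nonneg c] : (0 : ℤ) < M)
  have hsmall' : 2 * |(c : α)| < M := by exact_mod_cast hsmall
  have hx : (x : α) / M = k + c / M := by
    rw [show x = c + M * k by linarith]
    push_cast
    field_simp
    ring
  have hc : |(c : α) / M| < 1 / 2 := by
    rw [abs_div, abs_of_pos hM, div_lt_iff₀ hM]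
    linarith
  have hround : round ((c : α) / M) = 0 :=
    round_eq_zero_iff.2 ⟨by linarith [neg_abs_le ((c : α) / M)], (le_abs_self _).trans_lt hc⟩
  rw [hx, round_intCast_add, hround, add_zero]
  linarith

theorem explicit_crt_general (n : ℕ) (p : Fin n → ℕ)
    (hp : ∀ i, (p i).Prime) (hdist : Function.Injective p)
    (M : ℕ) (hM : M = ∏ i, p i)
    (Mi : Fin n → ℕ) (hMi : ∀ i, Mi i = M / p i)
    (a : Fin n → ℤ) (ha : ∀ i, a i * (Mi i : ℤ) ≡ 1 [ZMOD (p i)])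
    (c : ℤ) (hsize : 4 * |c| < M)
    (cres : Fin n → ℤ) (hc : ∀ i, c ≡ cres i [ZMOD (p i)])
    (r : ℤ) (hr : r = round (∑ i, (cres i * a i : ℝ) / (p i : ℝ))) :
    c = ∑ i, cres i * a i * (Mi i : ℤ) - r * M := by
  have hMi_eq : ∀ i, Mi i = ∏ j ∈ univ.erase i, p j := fun i => by
    rw [hMi, hM, Nat.prod_div_eq_prod_erase _ (mem_univ i) (hp i).ne_zero]
  have hpMi : ∀ i, p i * Mi i = M := fun i => by
    rw [hMi_eq, hM, mul_prod_erase _ _ (mem_univ i)]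
  have hcop : Pairwise (IsCoprime on fun i => (p i : ℤ)) := fun i j hij =>
    Nat.isCoprime_iff_coprime.2 ((Nat.coprime_primes (hp i) (hp j)).2 (hdist.ne hij))
  have hcrt : ∑ i, cres i * a i * (Mi i : ℤ) ≡ c [ZMOD M] := by
    have hdvd : ∀ i j, i ≠ j → (p i : ℤ) ∣ a j * Mi j := fun i j hij => by
      have hpMj : p i ∣ Mi j := hMi_eq j ▸ dvd_prod_of_mem p (mem_erase.2 ⟨hij, mem_univ i⟩)
      exact (Int.natCast_dvd_natCast.2 hpMj).mul_left _
    simpa only [hM, mul_assoc, Nat.cast_prod] using Int.sum_mul_modEq_prod _ _ _ hcop ha hdvd c hc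
  have hM0 : (M : ℝ) ≠ 0 := by
    rw [hM]; exact_mod_cast (prod_pos fun i _ => (hp i).pos).ne'
  have hsum : ∑ i, (cres i * a i : ℝ) / (p i : ℝ) =
      ((∑ i, cres i * a i * (Mi i : ℤ) : ℤ) : ℝ) / M := by
    push_cast
    exact sum_div_eq_sum_mul_div _ _ _ _ hM0 fun i _ => by exact_mod_cast hpMi i
  rw [hr, hsum, ← Int.cast_natCast M]
  exact hcrt.symm.eq_sub_round_div_mul (by linarith [abs_nonneg c])

/-- **Explicit CRT (Bernstein).**  With distinct primes `p i` of product `M > 4|c|`, CRT data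
`Mi i = M / p i` and `a i * Mi i ≡ 1 (mod p i)`, residues `cres i ≡ c (mod p i)` with
`0 ≤ cres i < p i`, and `r` the nearest integer to `∑ i, cres i * a i / p i`, we have
`c = ∑ i, cres i * a i * Mi i − r * M`. -/
theorem explicit_crt (n : ℕ) (p : Fin n → ℕ)
    (hp : ∀ i, (p i).Prime) (hdist : Function.Injective p)
    (M : ℕ) (hM : M = ∏ i, p i)
    (Mi : Fin n → ℕ) (hMi : ∀ i, Mi i = M / p i)
    (a : Fin n → ℤ) (ha : ∀ i, a i * (Mi i : ℤ) ≡ 1 [ZMOD (p i)])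
    (c : ℤ) (hsize : 4 * |c| < M)
    (cres : Fin n → ℤ) (hc : ∀ i, c ≡ cres i [ZMOD (p i)])
    (hlo : ∀ i, 0 ≤ cres i) (hhi : ∀ i, cres i < p i)
    (r : ℤ) (hr : r = round (∑ i, (cres i * a i : ℝ) / (p i : ℝ))) :
    c = ∑ i, cres i * a i * (Mi i : ℤ) - r * M :=
  explicit_crt_general n p hp hdist M hM Mi hMi a ha c hsize cres hc r hr
end

section
/- Let p and q be primes and c an integer with |c| < M/4 where M is a product of distinct primes p_1,...,p_n each coprime to q, with CRT data M_i = M/p_i and a_i M_i ≡ 1 (mod p_i), residues c_i ≡ c (mod p_i), 0 ≤ c_i < p_i, and r the nearest integer to Σ_i c_i a_i / p_i. Then c mod q equals (Σ_i c_i (a_i M_i mod q) − r (M mod q)) mod q. -/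
/-!
Put `S = ∑ i, cᵢ aᵢ Mᵢ`. Modulo `pᵢ` every term but the `i`-th vanishes and the `i`-th is
congruent to `cᵢ ≡ c`, so `S ≡ c (mod M)` by coprimality of the `pᵢ`. Since `∑ i, cᵢ aᵢ / pᵢ = S / M` and
`|c / M| < 1/2`, the integer `r` is the quotient of `S` by `M` for the remainder of least absolute
value, which is `c`: thus `c = S - r M` exactly, and this identity can be reduced modulo `q`.
-/

open Finset

section

variable {ι : Type*} [Fintype ι] [DecidableEq ι]

theorem sum_mul_prod_erase_modEq_of_pairwise_coprime {m : ι → ℤ}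
    (hm : Pairwise (Function.onFun IsCoprime m)) {a x : ι → ℤ} {c : ℤ}
    (ha : ∀ i, a i * ∏ j ∈ univ.erase i, m j ≡ 1 [ZMOD m i]) (hx : ∀ i, c ≡ x i [ZMOD m i]) :
    ∑ i, x i * (a i * ∏ j ∈ univ.erase i, m j) ≡ c [ZMOD ∏ i, m i] := by
  refine (Int.modEq_iff_dvd.2 <| prod_dvd_of_coprime (fun i _ j _ hij ↦ hm hij) fun l _ ↦ ?_).symm
  have hrest : ∑ i ∈ univ.erase l, x i * (a i * ∏ k ∈ univ.erase i, m k) ≡ 0 [ZMOD m l] :=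
    Int.modEq_zero_iff_dvd.2 <| dvd_sum fun i hi ↦ Dvd.dvd.mul_left (Dvd.dvd.mul_left
      (dvd_prod_of_mem m (mem_erase.2 ⟨(ne_of_mem_erase hi).symm, mem_univ l⟩)) _) _
  refine Int.ModEq.dvd ?_
  calc c ≡ x l * 1 + 0 [ZMOD m l] := by simpa only [mul_one, add_zero] using hx l
    _ ≡ _ [ZMOD m l] := ((ha l).symm.mul_left _).add hrest.symm
    _ = _ := add_sum_erase univ (fun i ↦ x i * (a i * ∏ j ∈ univ.erase i, m j)) (mem_univ l)

theorem sum_div_eq_sum_mul_prod_erase_div {K : Type*} [Field K] {m : ι → K} (hm : ∀ i, m i ≠ 0)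
    (x : ι → K) : ∑ i, x i / m i = (∑ i, x i * ∏ j ∈ univ.erase i, m j) / ∏ i, m i := by
  rw [sum_div]
  refine sum_congr rfl fun i _ ↦ ?_
  rw [← mul_prod_erase univ m (mem_univ i),
    mul_div_mul_right _ _ (prod_ne_zero_iff.2 fun j _ ↦ hm j)]

end

theorem sub_round_div_mul_eq_of_modEq (α : Type*) [Field α] [LinearOrder α] [IsStrictOrderedRing α]
    [FloorRing α] {S c M : ℤ} (hS : S ≡ c [ZMOD M]) (hc : 2 * |c| < M) :
    S - round ((S : α) / M) * M = c := by
  obtain ⟨k, hk⟩ := hS.symm.dvd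
  have hM : (0 : α) < M := by
    have := abs_nonneg c
    exact_mod_cast (by linarith : (0 : ℤ) < M)
  have hsmall : |(c : α) / M| < 1 / 2 := by
    rw [abs_div, abs_of_pos hM, div_lt_iff₀ hM]
    have : (2 : α) * |(c : α)| < M := by exact_mod_cast hc
    linarith
  have hround : round ((S : α) / M) = k := by
    have hSdiv : (S : α) / M = c / M + k := by
      rw [show S = c + M * k by linarith]
      push_cast
      field_simp
    rw [hSdiv, round_add_intCast, round_eq_zero_iff.2 ⟨(abs_lt.1 hsmall).1.le, (abs_lt.1 hsmall).2⟩,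
      zero_add]
  rw [hround]
  linarith

theorem explicit_crt_mod_q_general (q : ℕ)
    (n : ℕ) (p : Fin n → ℕ)
    (hp : ∀ i, (p i).Prime) (hdist : Function.Injective p)
    (M : ℕ) (hM : M = ∏ i, p i)
    (Mi : Fin n → ℕ) (hMi : ∀ i, Mi i = M / p i)
    (a : Fin n → ℤ) (ha : ∀ i, a i * (Mi i : ℤ) ≡ 1 [ZMOD (p i)])
    (c : ℤ) (hsize : 4 * |c| < M)
    (cres : Fin n → ℤ) (hc : ∀ i, c ≡ cres i [ZMOD (p i)])
    (r : ℤ) (hr : r = round (∑ i, (cres i * a i : ℝ) / (p i : ℝ))) :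
    c ≡ ∑ i, cres i * ((a i * (Mi i : ℤ)) % q) - r * ((M : ℤ) % q) [ZMOD q] := by
  have hMi' : ∀ i, Mi i = ∏ j ∈ univ.erase i, p j := fun i ↦ by
    rw [hMi, hM, ← mul_prod_erase univ p (mem_univ i), Nat.mul_div_cancel_left _ (hp i).pos]
  have hcoprime : Pairwise (Function.onFun IsCoprime fun i ↦ (p i : ℤ)) := fun i j hij ↦
    Nat.isCoprime_iff_coprime.2 ((Nat.coprime_primes (hp i) (hp j)).2 (hdist.ne hij))
  set S := ∑ i, cres i * (a i * (Mi i : ℤ)) with hS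
  have hSc : S ≡ c [ZMOD M] := by
    have := sum_mul_prod_erase_modEq_of_pairwise_coprime hcoprime
      (by simpa only [hMi', Nat.cast_prod] using ha) hc
    simpa only [hS, hMi', hM, Nat.cast_prod] using this
  have hrS : r = round ((S : ℝ) / M) := by
    rw [hr, sum_div_eq_sum_mul_prod_erase_div fun i ↦ Nat.cast_ne_zero.2 (hp i).ne_zero]
    push_cast [hS, hMi', hM]
    simp only [mul_assoc]
  have hcSM : c = S - r * M := by
    rw [hrS]
    exact (sub_round_div_mul_eq_of_modEq ℝ hSc (by linarith [abs_nonneg c])).symm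
  rw [← ZMod.intCast_eq_intCast_iff, hcSM]
  push_cast [hS, ZMod.intCast_mod]
  ring

/-- **Explicit CRT modulo `q`.**  Let `q` be a prime and `c` an integer with `4|c| < M`, where
`M` is a product of distinct primes `p i`, each coprime to `q`, with CRT data `Mi i = M / p i`
and `a i * Mi i ≡ 1 (mod p i)`, residues `cres i ≡ c (mod p i)` with `0 ≤ cres i < p i`, and
`r` the nearest integer to `∑ i, cres i * a i / p i`.  Then
`c ≡ ∑ i, cres i * ((a i * Mi i) mod q) - r * (M mod q) (mod q)`. -/
theorem explicit_crt_mod_q (q : ℕ) (hq : q.Prime)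
    (n : ℕ) (p : Fin n → ℕ)
    (hp : ∀ i, (p i).Prime) (hdist : Function.Injective p)
    (hcop : ∀ i, Nat.Coprime (p i) q)
    (M : ℕ) (hM : M = ∏ i, p i)
    (Mi : Fin n → ℕ) (hMi : ∀ i, Mi i = M / p i)
    (a : Fin n → ℤ) (ha : ∀ i, a i * (Mi i : ℤ) ≡ 1 [ZMOD (p i)])
    (c : ℤ) (hsize : 4 * |c| < M)
    (cres : Fin n → ℤ) (hc : ∀ i, c ≡ cres i [ZMOD (p i)])
    (hlo : ∀ i, 0 ≤ cres i) (hhi : ∀ i, cres i < p i)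
    (r : ℤ) (hr : r = round (∑ i, (cres i * a i : ℝ) / (p i : ℝ))) :
    c ≡ ∑ i, cres i * ((a i * (Mi i : ℤ)) % q) - r * ((M : ℤ) % q) [ZMOD q] :=
  explicit_crt_mod_q_general q n p hp hdist M hM Mi hMi a ha c hsize cres hc r hr
end
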